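/- Let L₀ be a lagrangian in the symplectic Hilbert space H with complex structure J. The map sending a self-adjoint bounded operator A on L₀⊥ to the lagrangian Gr(-J A) = {u - JAu : u ∈ L₀⊥} is a bijection between the space of bounded self-adjoint operators on L₀⊥ and the set Λ₀(L₀) of lagrangians complementary to L₀. -/

import Mathlib

/-!
Since `J` maps `L₀ᗮ` onto `L₀`, the map `A ↦ Gr(-J A)` is injective and each `Gr(-J A)` is a
complement of `L₀`. The identity `⟪J (u - J A u), v - J A v⟫ = ⟪A u, v⟫ - ⟪u, A v⟫` shows that
`Gr(-J A)` is isotropic exactly when `A` is symmetric, and an isotropic subspace which spans `H`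
together with a lagrangian is itself lagrangian. Conversely, a lagrangian `L` complementary to
`L₀` is closed, so the projection `P` onto `L₀` along `L` is bounded; `A = -J P` satisfies
`Gr(-J A) ⊆ L`, hence is symmetric by isotropy of `L`, and two complements of `L₀` one inside
the other are equal.
-/

open RealInnerProductSpace

universe u

variable {E : Type u} [NormedAddCommGroup E] [InnerProductSpace ℝ E]

namespace ContinuousLinearMap

variable {J : E →L[ℝ] E}

theorem apply_apply_of_comp_self_eq_neg_one (hJ2 : J ∘L J = -1) (x : E) : J (J x) = -x := by
  simpa using congr($hJ2 x)

theorem injective_of_comp_self_eq_neg_one (hJ2 : J ∘L J = -1) : Function.Injective J := by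
  intro x y hxy
  simpa [apply_apply_of_comp_self_eq_neg_one hJ2] using congr(J $hxy)

theorem inner_apply_left_of_adjoint_eq_neg [CompleteSpace E] (hJadj : adjoint J = -J) (x y : E) :
    ⟪J x, y⟫ = -⟪x, J y⟫ := by
  rw [← adjoint_inner_right, hJadj, neg_apply, inner_neg_right]

theorem inner_apply_apply_of_skew (hJ2 : J ∘L J = -1) (hskew : ∀ x y : E, ⟪J x, y⟫ = -⟪x, J y⟫)
    (x y : E) : ⟪J x, J y⟫ = ⟪x, y⟫ := by
  rw [hskew, apply_apply_of_comp_self_eq_neg_one hJ2, inner_neg_right, neg_neg]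

end ContinuousLinearMap

open ContinuousLinearMap

def IsLagrangian (J : E →L[ℝ] E) (L : Submodule ℝ E) : Prop :=
  L.map (J : E →ₗ[ℝ] E) = Lᗮ

theorem Submodule.map_le_orthogonal_iff (J : E →L[ℝ] E) (M : Submodule ℝ E) :
    M.map (J : E →ₗ[ℝ] E) ≤ Mᗮ ↔ ∀ x ∈ M, ∀ y ∈ M, ⟪J x, y⟫ = 0 := by
  rw [Submodule.map_le_iff_le_comap]
  exact ⟨fun h x hx => (Submodule.mem_orthogonal' _ _).1 (h hx),
    fun h x hx => (Submodule.mem_orthogonal' _ _).2 (h x hx)⟩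

namespace IsLagrangian

variable {J : E →L[ℝ] E} {L L₀ M : Submodule ℝ E} {x : E}

theorem apply_mem_orthogonal (hL : IsLagrangian J L) (hx : x ∈ L) : J x ∈ Lᗮ :=
  hL ▸ Submodule.mem_map_of_mem hx

theorem apply_mem_of_mem_orthogonal (hJ2 : J ∘L J = -1) (hL : IsLagrangian J L) (hx : x ∈ Lᗮ) :
    J x ∈ L := by
  rw [← hL] at hx
  obtain ⟨y, hy, rfl⟩ := hx
  simpa [apply_apply_of_comp_self_eq_neg_one hJ2] using hy

theorem mem_of_apply_mem_orthogonal (hJ2 : J ∘L J = -1) (hL : IsLagrangian J L)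
    (hx : J x ∈ Lᗮ) : x ∈ L := by
  simpa [apply_apply_of_comp_self_eq_neg_one hJ2] using hL.apply_mem_of_mem_orthogonal hJ2 hx

theorem isClosed (hJ2 : J ∘L J = -1) (hL : IsLagrangian J L) : IsClosed (L : Set E) := by
  have hpre : (L : Set E) = J ⁻¹' (Lᗮ : Set E) :=
    Set.ext fun _ => ⟨hL.apply_mem_orthogonal, hL.mem_of_apply_mem_orthogonal hJ2⟩
  exact hpre ▸ L.isClosed_orthogonal.preimage J.continuous

/-- For `x ∈ Mᗮ` write `J x = m + p` with `m ∈ M`, `p ∈ L₀`; then `J p ⊥ M + L₀`, so `p = 0`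
and `x = J (-m)`. -/
theorem of_map_le_orthogonal_of_sup_eq_top (hJ2 : J ∘L J = -1)
    (hskew : ∀ x y : E, ⟪J x, y⟫ = -⟪x, J y⟫) (hL₀ : IsLagrangian J L₀)
    (hM : M.map (J : E →ₗ[ℝ] E) ≤ Mᗮ) (hsup : M ⊔ L₀ = ⊤) : IsLagrangian J M := by
  refine le_antisymm hM fun x hx => ?_
  obtain ⟨m, hm, p, hp, hmp⟩ := Submodule.mem_sup.1 (hsup.symm ▸ Submodule.mem_top : J x ∈ M ⊔ L₀)
  have hJp : J p ∈ Mᗮ ⊓ L₀ᗮ := by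
    refine ⟨(Submodule.mem_orthogonal _ _).2 fun m' hm' => ?_, hL₀.apply_mem_orthogonal hp⟩
    have hx' : ⟪J m', J x⟫ = 0 := by
      rw [inner_apply_apply_of_skew hJ2 hskew]
      exact (Submodule.mem_orthogonal _ _).1 hx m' hm'
    have hm'' : ⟪J m', m⟫ = 0 := (M.map_le_orthogonal_iff J).1 hM m' hm' m hm
    rw [← hmp, inner_add_right, hm'', zero_add] at hx'
    rw [← neg_eq_zero, ← hskew, hx']
  rw [Submodule.inf_orthogonal, hsup, Submodule.top_orthogonal_eq_bot, Submodule.mem_bot,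
    map_eq_zero_iff J (injective_of_comp_self_eq_neg_one hJ2)] at hJp
  rw [hJp, add_zero] at hmp
  refine ⟨-m, neg_mem hm, ?_⟩
  simp [hmp, apply_apply_of_comp_self_eq_neg_one hJ2]

end IsLagrangian

/-- The paper's `Gr(-J A)`, the graph of `-J ∘ A : K → E`. -/
def graphNegJ (J : E →L[ℝ] E) (K : Submodule ℝ E) (A : K →L[ℝ] K) : Submodule ℝ E :=
  LinearMap.range ((K.subtypeL - J ∘L (K.subtypeL ∘L A) : K →L[ℝ] E) : K →ₗ[ℝ] E)

theorem mem_graphNegJ {J : E →L[ℝ] E} {K : Submodule ℝ E} {A : K →L[ℝ] K} {x : E} :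
    x ∈ graphNegJ J K A ↔ ∃ u : K, (u : E) - J (A u) = x :=
  Iff.rfl

theorem graphNegJ_le_iff {J : E →L[ℝ] E} {K : Submodule ℝ E} {A : K →L[ℝ] K}
    {L : Submodule ℝ E} : graphNegJ J K A ≤ L ↔ ∀ u : K, (u : E) - J (A u) ∈ L :=
  LinearMap.range_le_iff_comap.trans Submodule.eq_top_iff'

section graphNegJ

variable {J : E →L[ℝ] E} {L₀ : Submodule ℝ E}

theorem graphNegJ_injective (hJ2 : J ∘L J = -1) (hL₀ : IsLagrangian J L₀) :
    Function.Injective (graphNegJ J L₀ᗮ) := by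
  intro A B hAB
  ext u
  have hu : (u : E) - J (A u) ∈ graphNegJ J L₀ᗮ B := hAB ▸ mem_graphNegJ.2 ⟨u, rfl⟩
  obtain ⟨v, hv⟩ := mem_graphNegJ.1 hu
  have hdiff : (u : E) - v = J (A u - B v) := by
    rw [map_sub, sub_eq_sub_iff_sub_eq_sub]
    exact hv.symm
  have h0 : (u : E) - v = 0 :=
    Submodule.disjoint_def.1 L₀.orthogonal_disjoint _
      (hdiff ▸ hL₀.apply_mem_of_mem_orthogonal hJ2 (sub_mem (A u).2 (B v).2)) (sub_mem u.2 v.2)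
  have hAuBv : (A u : E) = B v :=
    sub_eq_zero.1 (injective_of_comp_self_eq_neg_one hJ2 (by rw [← hdiff, h0, map_zero]))
  rw [hAuBv, Subtype.ext (sub_eq_zero.1 h0)]

theorem graphNegJ_inf_eq_bot (hJ2 : J ∘L J = -1) (hL₀ : IsLagrangian J L₀)
    (A : L₀ᗮ →L[ℝ] L₀ᗮ) : graphNegJ J L₀ᗮ A ⊓ L₀ = ⊥ := by
  refine eq_bot_iff.2 fun x ⟨hxG, hx₀⟩ => ?_
  obtain ⟨u, rfl⟩ := mem_graphNegJ.1 hxG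
  have hu₀ : (u : E) ∈ L₀ := by
    simpa using add_mem hx₀ (hL₀.apply_mem_of_mem_orthogonal hJ2 (A u).2)
  obtain rfl : u = 0 := Subtype.ext (Submodule.disjoint_def.1 L₀.orthogonal_disjoint _ hu₀ u.2)
  simp

theorem graphNegJ_sup_eq_top [CompleteSpace E] (hJ2 : J ∘L J = -1) (hL₀ : IsLagrangian J L₀)
    (A : L₀ᗮ →L[ℝ] L₀ᗮ) : graphNegJ J L₀ᗮ A ⊔ L₀ = ⊤ := by
  have := (hL₀.isClosed hJ2).completeSpace_coe
  refine top_le_iff.1 (L₀.sup_orthogonal_of_hasOrthogonalProjection ▸ sup_le le_sup_right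
    fun q hq => ?_)
  have hG : q - J (A ⟨q, hq⟩) ∈ graphNegJ J L₀ᗮ A := mem_graphNegJ.2 ⟨⟨q, hq⟩, rfl⟩
  have hJA : J (A ⟨q, hq⟩) ∈ L₀ := hL₀.apply_mem_of_mem_orthogonal hJ2 (A _).2
  simpa using add_mem (Submodule.mem_sup_left hG) (Submodule.mem_sup_right hJA)

theorem inner_apply_sub_apply_sub (hJ2 : J ∘L J = -1) (hskew : ∀ x y : E, ⟪J x, y⟫ = -⟪x, J y⟫)
    (hL₀ : IsLagrangian J L₀) {u v a b : E} (hu : u ∈ L₀ᗮ) (hv : v ∈ L₀ᗮ) (ha : a ∈ L₀ᗮ)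
    (hb : b ∈ L₀ᗮ) : ⟪J (u - J a), v - J b⟫ = ⟪a, v⟫ - ⟪u, b⟫ := by
  have hJu : ⟪J u, v⟫ = 0 :=
    Submodule.inner_right_of_mem_orthogonal (hL₀.apply_mem_of_mem_orthogonal hJ2 hu) hv
  have hJb : ⟪a, J b⟫ = 0 :=
    Submodule.inner_left_of_mem_orthogonal (hL₀.apply_mem_of_mem_orthogonal hJ2 hb) ha
  rw [map_sub, apply_apply_of_comp_self_eq_neg_one hJ2, sub_neg_eq_add, inner_add_left,
    inner_sub_right, inner_sub_right, inner_apply_apply_of_skew hJ2 hskew, hJu, hJb]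
  ring

theorem graphNegJ_map_le_orthogonal_iff (hJ2 : J ∘L J = -1)
    (hskew : ∀ x y : E, ⟪J x, y⟫ = -⟪x, J y⟫) (hL₀ : IsLagrangian J L₀) (A : L₀ᗮ →L[ℝ] L₀ᗮ) :
    (graphNegJ J L₀ᗮ A).map (J : E →ₗ[ℝ] E) ≤ (graphNegJ J L₀ᗮ A)ᗮ ↔
      (A : L₀ᗮ →ₗ[ℝ] L₀ᗮ).IsSymmetric := by
  have hinner (u v : L₀ᗮ) : ⟪J (u - J (A u)), v - J (A v)⟫ = ⟪A u, v⟫ - ⟪u, A v⟫ := by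
    rw [inner_apply_sub_apply_sub hJ2 hskew hL₀ u.2 v.2 (A u).2 (A v).2, Submodule.coe_inner,
      Submodule.coe_inner]
  rw [Submodule.map_le_orthogonal_iff]
  constructor
  · intro h u v
    rw [coe_coe, ← sub_eq_zero, ← hinner]
    exact h _ (mem_graphNegJ.2 ⟨u, rfl⟩) _ (mem_graphNegJ.2 ⟨v, rfl⟩)
  · intro h x hx y hy
    obtain ⟨u, rfl⟩ := mem_graphNegJ.1 hx
    obtain ⟨v, rfl⟩ := mem_graphNegJ.1 hy
    rw [hinner, sub_eq_zero]
    exact h u v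

theorem isLagrangian_graphNegJ [CompleteSpace E] (hJ2 : J ∘L J = -1)
    (hskew : ∀ x y : E, ⟪J x, y⟫ = -⟪x, J y⟫) (hL₀ : IsLagrangian J L₀) {A : L₀ᗮ →L[ℝ] L₀ᗮ}
    (hA : (A : L₀ᗮ →ₗ[ℝ] L₀ᗮ).IsSymmetric) : IsLagrangian J (graphNegJ J L₀ᗮ A) :=
  hL₀.of_map_le_orthogonal_of_sup_eq_top hJ2 hskew
    ((graphNegJ_map_le_orthogonal_iff hJ2 hskew hL₀ A).2 hA) (graphNegJ_sup_eq_top hJ2 hL₀ A)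

/-- Take `A = -J P` with `P` the projection onto `L₀` along `L`: then `u - J (A u) = u - P u`. -/
theorem exists_graphNegJ_le [CompleteSpace E] (hJ2 : J ∘L J = -1) (hL₀ : IsLagrangian J L₀)
    {L : Submodule ℝ E} (hcompl : IsCompl L₀ L) (hL : IsClosed (L : Set E)) :
    ∃ A : L₀ᗮ →L[ℝ] L₀ᗮ, graphNegJ J L₀ᗮ A ≤ L := by
  let P := L₀.projectionL L
    (Submodule.IsCompl.isTopCompl_of_isClosed hcompl (hL₀.isClosed hJ2) hL)
  have hA (u : L₀ᗮ) : ((-J) ∘L P ∘L L₀ᗮ.subtypeL) u ∈ L₀ᗮ :=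
    neg_mem (hL₀.apply_mem_orthogonal (L₀.projectionL_apply_mem _ _))
  refine ⟨((-J) ∘L P ∘L L₀ᗮ.subtypeL).codRestrict L₀ᗮ hA, graphNegJ_le_iff.2 fun u => ?_⟩
  change (u : E) - J (-J (P u)) ∈ L
  rw [map_neg, apply_apply_of_comp_self_eq_neg_one hJ2, neg_neg]
  exact Submodule.sub_projection_mem hcompl u

theorem exists_isSymmetric_graphNegJ_eq [CompleteSpace E] (hJ2 : J ∘L J = -1)
    (hskew : ∀ x y : E, ⟪J x, y⟫ = -⟪x, J y⟫) (hL₀ : IsLagrangian J L₀) {L : Submodule ℝ E}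
    (hL : IsLagrangian J L) (hinf : L ⊓ L₀ = ⊥) (hsup : L ⊔ L₀ = ⊤) :
    ∃ A : L₀ᗮ →L[ℝ] L₀ᗮ, (A : L₀ᗮ →ₗ[ℝ] L₀ᗮ).IsSymmetric ∧ L = graphNegJ J L₀ᗮ A := by
  have hcompl : IsCompl L₀ L :=
    ⟨disjoint_iff.2 (inf_comm L₀ L ▸ hinf), codisjoint_iff.2 (sup_comm L₀ L ▸ hsup)⟩
  obtain ⟨A, hAL⟩ := exists_graphNegJ_le hJ2 hL₀ hcompl (hL.isClosed hJ2)
  refine ⟨A, (graphNegJ_map_le_orthogonal_iff hJ2 hskew hL₀ A).1 ?_, ?_⟩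
  · exact (Submodule.map_mono hAL).trans ((le_of_eq hL).trans (Submodule.orthogonal_le hAL))
  · refine (eq_of_le_of_inf_le_of_sup_le (z := L₀) hAL ?_ ?_).symm
    · rw [hinf]
      exact bot_le
    · rw [hsup, graphNegJ_sup_eq_top hJ2 hL₀ A]

end graphNegJ

variable {H : Type*} [NormedAddCommGroup H] [InnerProductSpace ℝ H] [CompleteSpace H]

/-- Let `L₀` be a lagrangian in the symplectic Hilbert space `H` with complex structure
`J`.  The map sending a bounded self-adjoint operator `A` on `L₀ᗮ` to
`Gr(-J A) = {u - J A u : u ∈ L₀ᗮ}` is a bijection between the bounded self-adjoint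
operators on `L₀ᗮ` and the set of lagrangians complementary to `L₀`: it is injective,
every `Gr(-JA)` is a lagrangian complementary to `L₀`, and every lagrangian
complementary to `L₀` arises this way. -/
theorem chart_bijection (J : H →L[ℝ] H)
    (hJ2 : J ∘L J = -1) (hJadj : ContinuousLinearMap.adjoint J = -J)
    (L₀ : Submodule ℝ H) (hL₀ : L₀.map (J : H →ₗ[ℝ] H) = L₀ᗮ) :
    haveI : CompleteSpace ↥L₀ᗮ := L₀.isClosed_orthogonal.completeSpace_coe
    let Gr : (↥L₀ᗮ →L[ℝ] ↥L₀ᗮ) → Submodule ℝ H := fun A =>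
      LinearMap.range ((L₀ᗮ.subtypeL - J ∘L (L₀ᗮ.subtypeL ∘L A) : ↥L₀ᗮ →L[ℝ] H) : ↥L₀ᗮ →ₗ[ℝ] H)
    (∀ A B : ↥L₀ᗮ →L[ℝ] ↥L₀ᗮ, IsSelfAdjoint A → IsSelfAdjoint B →
        Gr A = Gr B → A = B) ∧
    (∀ A : ↥L₀ᗮ →L[ℝ] ↥L₀ᗮ, IsSelfAdjoint A →
        (Gr A).map (J : H →ₗ[ℝ] H) = (Gr A)ᗮ ∧ Gr A ⊓ L₀ = ⊥ ∧ Gr A ⊔ L₀ = ⊤) ∧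
    (∀ L : Submodule ℝ H, L.map (J : H →ₗ[ℝ] H) = Lᗮ → L ⊓ L₀ = ⊥ → L ⊔ L₀ = ⊤ →
        ∃ A : ↥L₀ᗮ →L[ℝ] ↥L₀ᗮ, IsSelfAdjoint A ∧ L = Gr A) := by
  have : CompleteSpace ↥L₀ᗮ := L₀.isClosed_orthogonal.completeSpace_coe
  have hskew := inner_apply_left_of_adjoint_eq_neg hJadj
  refine ⟨fun A B _ _ hAB => graphNegJ_injective hJ2 hL₀ hAB, fun A hA => ?_,
    fun L hL hinf hsup => ?_⟩
  · exact ⟨isLagrangian_graphNegJ hJ2 hskew hL₀ (isSelfAdjoint_iff_isSymmetric.1 hA),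
      graphNegJ_inf_eq_bot hJ2 hL₀ A, graphNegJ_sup_eq_top hJ2 hL₀ A⟩
  · obtain ⟨A, hA, hLA⟩ := exists_isSymmetric_graphNegJ_eq hJ2 hskew hL₀ hL hinf hsup
    exact ⟨A, isSelfAdjoint_iff_isSymmetric.2 hA, hLA⟩
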